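/- arXiv:2202.10515 — 5 statements merged into one kernel-verified Lean document; each statement's English description precedes it below -/
import Mathlib

section
/- A (k-1)-tree with n vertices has exactly (3n - 2k)(k-1)(k-2)/6 triangles. -/
/-!
Induct on the number of vertices. In a `(k-1)`-tree on `n + 1 ≥ k + 1` vertices the neighbours
of the last vertex `v` are exactly its `k - 1` earlier neighbours, and they form a clique. Hence
the triangles through `v` are the `(k-1).choose 2` pairs of neighbours, while the triangles
avoiding `v` are those of the `(k-1)`-tree on the first `n` vertices. Starting from the
`k.choose 3` triangles of `K_k`, a `(k-1)`-tree on `n` vertices therefore has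
`k.choose 3 + (n - k) * (k-1).choose 2 = (3n - 2k)(k-1)(k-2)/6` triangles.
-/

/-- A `(k-1)`-tree on vertex set `Fin n`, built by starting with a complete graph on the
first `k` vertices and attaching each later vertex `j` to `k-1` earlier vertices that
together with `j` form a `k`-clique. -/
def IsKm1Tree (k n : ℕ) (G : SimpleGraph (Fin n)) [DecidableRel G.Adj] : Prop :=
  k ≤ n ∧
  (∀ i j : Fin n, (i : ℕ) < k → (j : ℕ) < k → i ≠ j → G.Adj i j) ∧
  (∀ j : Fin n, k ≤ (j : ℕ) →
    (Finset.univ.filter (fun i : Fin n => (i : ℕ) < (j : ℕ) ∧ G.Adj i j)).card = k - 1 ∧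
    G.IsClique (insert j {i : Fin n | (i : ℕ) < (j : ℕ) ∧ G.Adj i j}))

open Finset

theorem Nat.choose_three_add_sub_mul_choose_two {k n : ℕ} (hk : k ≤ n) :
    k.choose 3 + (n - k) * (k - 1).choose 2 = (3 * n - 2 * k) * (k - 1) * (k - 2) / 6 := by
  have h3 : 6 * k.choose 3 = k * (k - 1) * (k - 2) := by
    rw [show 6 * k.choose 3 = (3).factorial * k.choose 3 from rfl,
      ← Nat.descFactorial_eq_factorial_mul_choose]
    simp [Nat.descFactorial, mul_comm]
  have h2 : 2 * (k - 1).choose 2 = (k - 1) * (k - 2) := by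
    rw [show 2 * (k - 1).choose 2 = (2).factorial * (k - 1).choose 2 from rfl,
      ← Nat.descFactorial_eq_factorial_mul_choose]
    simp [Nat.descFactorial, Nat.sub_sub, mul_comm]
  obtain ⟨d, rfl⟩ := Nat.exists_eq_add_of_le hk
  rw [show 3 * (k + d) - 2 * k = k + 3 * d by omega, Nat.add_sub_cancel_left]
  refine (Nat.div_eq_of_eq_mul_left (by norm_num) ?_).symm
  calc (k + 3 * d) * (k - 1) * (k - 2)
      = 6 * k.choose 3 + 3 * d * (2 * (k - 1).choose 2) := by rw [h3, h2]; ring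
    _ = (k.choose 3 + d * (k - 1).choose 2) * 6 := by ring

namespace SimpleGraph

variable {V W : Type*} {G : SimpleGraph V}

theorem isNClique_comap_iff {f : W → V} (hf : f.Injective) {r : ℕ} {t : Finset W} :
    (G.comap f).IsNClique r t ↔ G.IsNClique r (t.map ⟨f, hf⟩) := by
  simp only [isNClique_iff, coe_map, card_map, Function.Embedding.coeFn_mk]
  refine and_congr_left fun _ => ⟨fun ht => ?_, fun ht a ha b hb hab => ?_⟩
  · rintro _ ⟨a, ha, rfl⟩ _ ⟨b, hb, rfl⟩ hab
    exact ht ha hb (ne_of_apply_ne f hab)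
  · exact ht (Set.mem_image_of_mem f ha) (Set.mem_image_of_mem f hb) (hf.ne hab)

variable [Fintype V] [DecidableEq V]

theorem cliqueFinset_top [DecidableRel (⊤ : SimpleGraph V).Adj] (r : ℕ) :
    (⊤ : SimpleGraph V).cliqueFinset r = powersetCard r univ := by
  ext s
  simp [isNClique_iff, IsClique.top]

variable [DecidableRel G.Adj]

theorem card_cliqueFinset_comap [Fintype W] [DecidableEq W] {f : W → V} (hf : f.Injective)
    (r : ℕ) :
    #((G.comap f).cliqueFinset r) = #{s ∈ G.cliqueFinset r | ∀ v ∈ s, v ∈ Set.range f} := by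
  rw [← card_map ⟨map ⟨f, hf⟩, Finset.map_injective _⟩]
  congr 1
  ext s
  simp only [mem_map, mem_cliqueFinset_iff, mem_filter, Function.Embedding.coeFn_mk]
  constructor
  · rintro ⟨t, ht, rfl⟩
    refine ⟨(isNClique_comap_iff hf).1 ht, fun v hv => ?_⟩
    obtain ⟨w, -, rfl⟩ := mem_map.1 hv
    exact Set.mem_range_self w
  · rintro ⟨hs, hrange⟩
    obtain ⟨t, -, rfl⟩ : ∃ t ⊆ univ, s = t.map ⟨f, hf⟩ :=
      subset_map_iff.1 fun v hv => by simpa using hrange v hv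
    exact ⟨t, (isNClique_comap_iff hf).2 hs, rfl⟩

theorem card_cliqueFinset_succ_mem {v : V} (hv : G.IsClique (G.neighborSet v)) (r : ℕ) :
    #{s ∈ G.cliqueFinset (r + 1) | v ∈ s} = (G.degree v).choose r := by
  rw [← card_neighborFinset_eq_degree, ← card_powersetCard]
  refine card_nbij' (fun s => s.erase v) (insert v) (fun s hs => ?_) (fun t ht => ?_)
    (fun s hs => insert_erase (mem_filter.1 hs).2) (fun t ht => erase_insert fun hvt => ?_)
  · obtain ⟨hs, hvs⟩ := mem_filter.1 hs
    rw [mem_cliqueFinset_iff] at hs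
    refine mem_powersetCard.2 ⟨fun w hw => ?_, (hs.erase_of_mem hvs).card_eq⟩
    obtain ⟨hwv, hws⟩ := mem_erase.1 hw
    exact (mem_neighborFinset _ _ _).2 (hs.isClique hvs hws hwv.symm)
  · obtain ⟨hsub, hcard⟩ := mem_powersetCard.1 ht
    have hN : ∀ w ∈ t, G.Adj v w := fun w hw => (mem_neighborFinset _ _ _).1 (hsub hw)
    refine mem_filter.2 ⟨mem_cliqueFinset_iff.2 ?_, mem_insert_self v t⟩
    exact IsNClique.insert ⟨hv.subset hN, hcard⟩ hN
  · exact G.irrefl ((mem_neighborFinset _ _ _).1 (mem_powersetCard.1 ht |>.1 hvt))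

theorem card_cliqueFinset_succ_eq_comap_castSucc_add {m : ℕ} {G : SimpleGraph (Fin (m + 1))}
    [DecidableRel G.Adj] (hG : G.IsClique (G.neighborSet (Fin.last m))) (r : ℕ) :
    #(G.cliqueFinset (r + 1)) =
      #((G.comap Fin.castSucc).cliqueFinset (r + 1)) + (G.degree (Fin.last m)).choose r := by
  rw [← card_filter_add_card_filter_not (s := G.cliqueFinset (r + 1))
    (fun s => Fin.last m ∈ s),
    card_cliqueFinset_succ_mem hG, card_cliqueFinset_comap (Fin.castSucc_injective m), add_comm]
  congr 2
  ext s
  simp only [mem_filter, Set.mem_range, Fin.exists_castSucc_eq]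
  exact and_congr_right fun _ => ⟨fun hs v hv hvl => hs (hvl ▸ hv), fun hs hl => hs _ hl rfl⟩

theorem filter_lt_adj_last_eq_neighborFinset {m : ℕ} (G : SimpleGraph (Fin (m + 1)))
    [DecidableRel G.Adj] :
    ({i | (i : ℕ) < m ∧ G.Adj i (Fin.last m)} : Finset (Fin (m + 1))) =
      G.neighborFinset (Fin.last m) := by
  ext i
  simp only [mem_filter, mem_univ, true_and, mem_neighborFinset, G.adj_comm (Fin.last m)]
  exact and_iff_right_of_imp fun hi => Fin.val_lt_last (G.ne_of_adj hi)

end SimpleGraph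

open SimpleGraph

namespace IsKm1Tree

theorem eq_top {k : ℕ} {G : SimpleGraph (Fin k)} [DecidableRel G.Adj] (h : IsKm1Tree k k G) :
    G = ⊤ := by
  ext i j
  exact ⟨G.ne_of_adj, h.2.1 i j i.2 j.2⟩

variable {k m : ℕ} {G : SimpleGraph (Fin (m + 1))} [DecidableRel G.Adj]

theorem degree_last (h : IsKm1Tree k (m + 1) G) (hk : k ≤ m) :
    G.degree (Fin.last m) = k - 1 := by
  rw [← card_neighborFinset_eq_degree, ← filter_lt_adj_last_eq_neighborFinset]
  exact (h.2.2 (Fin.last m) hk).1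

theorem isClique_neighborSet_last (h : IsKm1Tree k (m + 1) G) (hk : k ≤ m) :
    G.IsClique (G.neighborSet (Fin.last m)) :=
  (h.2.2 (Fin.last m) hk).2.subset fun _ hi =>
    Or.inr ⟨Fin.val_lt_last (G.ne_of_adj hi).symm, hi.symm⟩

theorem comap_castSucc (h : IsKm1Tree k (m + 1) G) (hk : k ≤ m) :
    IsKm1Tree k m (G.comap Fin.castSucc) := by
  obtain ⟨-, hbase, hstep⟩ := h
  refine ⟨hk, fun i j hi hj hij => hbase _ _ hi hj ((Fin.castSucc_injective m).ne hij),
    fun j hj => ?_⟩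
  obtain ⟨hcard, hclique⟩ := hstep j.castSucc hj
  have hmaps : Set.MapsTo Fin.castSucc
      (insert j {i : Fin m | (i : ℕ) < j ∧ (G.comap Fin.castSucc).Adj i j})
      (insert j.castSucc {i : Fin (m + 1) | (i : ℕ) < j ∧ G.Adj i j.castSucc}) := by
    rintro i (rfl | hi)
    · exact Set.mem_insert _ _
    · exact Or.inr hi
  refine ⟨?_, fun a ha b hb hab =>
    hclique (hmaps ha) (hmaps hb) ((Fin.castSucc_injective m).ne hab)⟩
  rw [← hcard, Fin.univ_castSuccEmb, filter_cons_of_neg _ _ _ _ (by simp), filter_map, card_map]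
  rfl

theorem card_cliqueFinset_three {n : ℕ} {G : SimpleGraph (Fin n)} [DecidableRel G.Adj]
    (h : IsKm1Tree k n G) :
    #(G.cliqueFinset 3) = k.choose 3 + (n - k) * (k - 1).choose 2 := by
  induction n, h.1 using Nat.le_induction with
  | base =>
    obtain rfl := h.eq_top
    rw [cliqueFinset_top, card_powersetCard, card_univ, Fintype.card_fin, Nat.sub_self,
      zero_mul, add_zero]
  | succ m hkm ih =>
    rw [card_cliqueFinset_succ_eq_comap_castSucc_add (h.isClique_neighborSet_last hkm),
      ih (h.comap_castSucc hkm), h.degree_last hkm, Nat.sub_add_comm hkm]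
    ring

end IsKm1Tree

theorem km1tree_triangle_count (k n : ℕ) (G : SimpleGraph (Fin n)) [DecidableRel G.Adj]
    (h : IsKm1Tree k n G) :
    (G.cliqueFinset 3).card = (3 * n - 2 * k) * (k - 1) * (k - 2) / 6 := by
  rw [← Nat.choose_three_add_sub_mul_choose_two h.1]
  exact h.card_cliqueFinset_three
end

section
/- For a (k-1)-tree G with n vertices, the matrix S(G) defined by S(G)_{ii} = (|N(i)| - (k-2))/(k(k-1)(n-k+1)), S(G)_{ij} = (|N(i) ∩ N(j)| - (k-3))/(k(k-1)(n-k+1)) for edges (i,j), and S(G)_{ij} = 0 for non-adjacent i ≠ j, is positive semidefinite. -/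
/-!
Put `D = k (k - 1) (n - k + 1)`. The construction produces `n - k + 1` cliques of size `k`
(the initial `K_k` and one per attached vertex), and `D • S(G)` is the Gram matrix `Bᵀ B` of
their incidence vectors. Indeed, if `i ≤ j` are equal or adjacent, the common closed
neighbourhood `N[i] ∩ N[j]` consists of the first clique containing both (the one created at
`max j (k - 1)`) together with one new vertex for each later clique through `i` and `j`, so exactly
`|N[i] ∩ N[j]| - (k - 1)` cliques contain `i` and `j`: this is the numerator of `S(G)_ij`.
Non-adjacent vertices lie in no common clique.
-/

open Finset Matrix

section IncidenceMatrix

variable {ι α R : Type*} [DecidableEq α]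

variable (R) in
def familyIncMatrix [Zero R] [One R] (s : ι → Finset α) : Matrix ι α R :=
  of fun m v => if v ∈ s m then 1 else 0

lemma transpose_mul_self_familyIncMatrix_apply [Fintype ι] [NonAssocSemiring R]
    (s : ι → Finset α) (i j : α) :
    ((familyIncMatrix R s)ᵀ * familyIncMatrix R s) i j = #{m | i ∈ s m ∧ j ∈ s m} := by
  simp [familyIncMatrix, mul_apply, ← ite_and, and_comm]

end IncidenceMatrix

namespace SimpleGraph

variable {V : Type*} [Fintype V] [DecidableEq V] {G : SimpleGraph V} [DecidableRel G.Adj]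
  {u v : V}

variable (G) in
def closedNeighborFinset (v : V) : Finset V := insert v (G.neighborFinset v)

@[simp]
lemma mem_closedNeighborFinset : u ∈ G.closedNeighborFinset v ↔ u = v ∨ G.Adj v u := by
  simp [closedNeighborFinset]

lemma mem_closedNeighborFinset_comm :
    u ∈ G.closedNeighborFinset v ↔ v ∈ G.closedNeighborFinset u := by
  simp [eq_comm, adj_comm]

lemma card_closedNeighborFinset (v : V) :
    #(G.closedNeighborFinset v) = #(G.neighborFinset v) + 1 :=
  card_insert_of_notMem (by simp)

lemma card_closedNeighborFinset_inter_of_adj (huv : G.Adj u v) :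
    #(G.closedNeighborFinset u ∩ G.closedNeighborFinset v) =
      #(G.neighborFinset u ∩ G.neighborFinset v) + 2 := by
  have : G.closedNeighborFinset u ∩ G.closedNeighborFinset v =
      insert u (insert v (G.neighborFinset u ∩ G.neighborFinset v)) := by
    ext w
    simp only [mem_inter, mem_closedNeighborFinset, mem_insert, mem_neighborFinset]
    constructor
    · rintro ⟨rfl | huw, rfl | hvw⟩ <;> tauto
    · rintro (rfl | rfl | ⟨huw, hvw⟩)
      · exact ⟨Or.inl rfl, Or.inr huv.symm⟩
      · exact ⟨Or.inr huv, Or.inl rfl⟩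
      · exact ⟨Or.inr huw, Or.inr hvw⟩
  rw [this, card_insert_of_notMem (by simp [huv.ne]), card_insert_of_notMem (by simp)]

lemma IsClique.mem_closedNeighborFinset {s : Set V} (hs : G.IsClique s) (hu : u ∈ s)
    (hv : v ∈ s) : u ∈ G.closedNeighborFinset v := by
  by_cases huv : u = v
  · simp [huv]
  · exact SimpleGraph.mem_closedNeighborFinset.2 (Or.inr (hs hv hu (Ne.symm huv)))

end SimpleGraph

open SimpleGraph

section TreeCliques

variable {k n : ℕ} {G : SimpleGraph (Fin n)} [DecidableRel G.Adj] {i j c m : Fin n}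

/- The clique created when `m` is attached, i.e. `m` with its earlier neighbours; for `m = k - 1`
this is the initial `K_k`, and it is empty for `m < k - 1`. -/
variable (k G) in
def treeClique (m : Fin n) : Finset (Fin n) :=
  {v ∈ G.closedNeighborFinset m | k - 1 ≤ (m : ℕ) ∧ v ≤ m}

variable (k G) in
def treeCliquesThrough (i j : Fin n) : Finset (Fin n) :=
  {m | i ∈ treeClique k G m ∧ j ∈ treeClique k G m}

variable (k G) in
def laterCommonNeighbors (i j : Fin n) : Finset (Fin n) :=
  {m | j < m ∧ k ≤ (m : ℕ) ∧ G.Adj i m ∧ G.Adj j m}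

lemma mem_treeClique {v : Fin n} :
    v ∈ treeClique k G m ↔ (v = m ∨ G.Adj m v) ∧ k - 1 ≤ (m : ℕ) ∧ v ≤ m := by
  simp [treeClique]

lemma mem_laterCommonNeighbors :
    m ∈ laterCommonNeighbors k G i j ↔
      j < m ∧ k ≤ (m : ℕ) ∧ G.Adj i m ∧ G.Adj j m := by
  simp [laterCommonNeighbors]

lemma treeCliquesThrough_comm : treeCliquesThrough k G i j = treeCliquesThrough k G j i := by
  simp only [treeCliquesThrough, and_comm]

namespace IsKm1Tree

lemma isClique_treeClique (h : IsKm1Tree k n G) (m : Fin n) :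
    G.IsClique (treeClique k G m : Set (Fin n)) := by
  obtain ⟨-, hinit, hstep⟩ := h
  by_cases hm : k ≤ (m : ℕ)
  · refine (hstep m hm).2.subset fun v hv => ?_
    obtain ⟨rfl | hmv, -, hvm⟩ := mem_treeClique.1 hv
    · exact Set.mem_insert _ _
    · exact Set.mem_insert_of_mem _ ⟨Fin.lt_def.1 (lt_of_le_of_ne hvm hmv.ne'), hmv.symm⟩
  · intro u hu v hv huv
    simp only [mem_coe, mem_treeClique, Fin.le_def] at hu hv
    exact hinit u v (by omega) (by omega) huv

lemma card_treeClique (h : IsKm1Tree k n G) (hk : 0 < k) (hm : k - 1 ≤ (m : ℕ)) :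
    #(treeClique k G m) = k := by
  obtain ⟨-, hinit, hstep⟩ := h
  rcases hm.lt_or_eq with hm | hm
  · have hlower :
        treeClique k G m = insert m ({i | (i : ℕ) < m ∧ G.Adj i m} : Finset (Fin n)) := by
      ext v
      simp only [mem_treeClique, mem_insert, mem_filter, mem_univ, true_and, Fin.le_def]
      constructor
      · rintro ⟨rfl | hmv, -, hvm⟩
        · exact Or.inl rfl
        · exact Or.inr ⟨lt_of_le_of_ne hvm (Fin.val_ne_of_ne hmv.ne'), hmv.symm⟩
      · rintro (rfl | ⟨hvm, hvm'⟩)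
        · exact ⟨Or.inl rfl, by omega, le_rfl⟩
        · exact ⟨Or.inr hvm'.symm, by omega, hvm.le⟩
    rw [hlower, card_insert_of_notMem (by simp), (hstep m (by omega)).1]
    omega
  · have hinitial : treeClique k G m = Iic m := by
      ext v
      simp only [mem_treeClique, mem_Iic, Fin.le_def]
      refine ⟨fun hv => hv.2.2, fun hvm => ⟨?_, by omega, hvm⟩⟩
      by_cases hv : v = m
      · exact Or.inl hv
      · exact Or.inr (hinit m v (by omega) (by omega) (Ne.symm hv))
    rw [hinitial, Fin.card_Iic]
    omega

lemma mem_treeClique_of_le (h : IsKm1Tree k n G) {v : Fin n} (hvc : v ≤ c)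
    (hv : v ∈ G.closedNeighborFinset j) (hc : (c : ℕ) = max (j : ℕ) (k - 1)) :
    v ∈ treeClique k G c := by
  refine mem_treeClique.2 ⟨?_, by omega, hvc⟩
  rw [Fin.le_def] at hvc
  rcases le_or_gt (k - 1) (j : ℕ) with hj | hj
  · obtain rfl : c = j := Fin.ext (by omega)
    simpa using hv
  · by_cases hvc' : v = c
    · exact Or.inl hvc'
    · exact Or.inr (h.2.1 c v (by omega) (by omega) (Ne.symm hvc'))

lemma treeCliquesThrough_eq (h : IsKm1Tree k n G) (hij : i ≤ j)
    (hi : i ∈ G.closedNeighborFinset j) (hc : (c : ℕ) = max (j : ℕ) (k - 1)) :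
    treeCliquesThrough k G i j = insert c (laterCommonNeighbors k G i j) := by
  rw [Fin.le_def] at hij
  have hic := h.mem_treeClique_of_le (Fin.le_def.2 (by omega)) hi hc
  have hjc := h.mem_treeClique_of_le (v := j) (Fin.le_def.2 (by omega)) (by simp) hc
  ext m
  simp only [treeCliquesThrough, mem_filter, mem_univ, true_and, mem_insert,
    mem_laterCommonNeighbors, Fin.lt_def]
  constructor
  · rintro ⟨him, hjm⟩
    rw [mem_treeClique, Fin.le_def] at him hjm
    by_cases hmc : (m : ℕ) ≤ c
    · exact Or.inl (Fin.ext (by omega))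
    · refine Or.inr ⟨by omega, by omega, ?_, ?_⟩
      · exact him.1.resolve_left (Fin.ne_of_val_ne (by omega)) |>.symm
      · exact hjm.1.resolve_left (Fin.ne_of_val_ne (by omega)) |>.symm
  · rintro (rfl | ⟨hjm, hkm, him, hjm'⟩)
    · exact ⟨hic, hjc⟩
    · exact ⟨mem_treeClique.2 ⟨Or.inr him.symm, by omega, Fin.le_def.2 (by omega)⟩,
        mem_treeClique.2 ⟨Or.inr hjm'.symm, by omega, Fin.le_def.2 (by omega)⟩⟩

lemma closedNeighborFinset_inter_eq (h : IsKm1Tree k n G) (hij : i ≤ j)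
    (hi : i ∈ G.closedNeighborFinset j) (hc : (c : ℕ) = max (j : ℕ) (k - 1)) :
    G.closedNeighborFinset i ∩ G.closedNeighborFinset j =
      treeClique k G c ∪ laterCommonNeighbors k G i j := by
  rw [Fin.le_def] at hij
  have hic := h.mem_treeClique_of_le (Fin.le_def.2 (by omega)) hi hc
  have hjc := h.mem_treeClique_of_le (v := j) (Fin.le_def.2 (by omega)) (by simp) hc
  ext v
  simp only [mem_inter, mem_union, mem_laterCommonNeighbors, Fin.lt_def]
  constructor
  · rintro ⟨hvi, hvj⟩
    by_cases hvc : (v : ℕ) ≤ c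
    · exact Or.inl (h.mem_treeClique_of_le (Fin.le_def.2 hvc) hvj hc)
    · right
      refine ⟨by omega, by omega, ?_, ?_⟩
      · exact (mem_closedNeighborFinset.1 hvi).resolve_left (Fin.ne_of_val_ne (by omega))
      · exact (mem_closedNeighborFinset.1 hvj).resolve_left (Fin.ne_of_val_ne (by omega))
  · rintro (hv | ⟨-, -, hiv, hjv⟩)
    · exact ⟨(h.isClique_treeClique c).mem_closedNeighborFinset hv hic,
        (h.isClique_treeClique c).mem_closedNeighborFinset hv hjc⟩
    · exact ⟨mem_closedNeighborFinset.2 (Or.inr hiv), mem_closedNeighborFinset.2 (Or.inr hjv)⟩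

lemma card_treeCliquesThrough_add_of_le (h : IsKm1Tree k n G) (hk : 0 < k) (hij : i ≤ j)
    (hi : i ∈ G.closedNeighborFinset j) :
    #(treeCliquesThrough k G i j) + (k - 1) =
      #(G.closedNeighborFinset i ∩ G.closedNeighborFinset j) := by
  have hkn := h.1
  let c : Fin n := ⟨max (j : ℕ) (k - 1), by omega⟩
  have hc : (c : ℕ) = max (j : ℕ) (k - 1) := rfl
  have hdisj : Disjoint (treeClique k G c) (laterCommonNeighbors k G i j) := by
    refine disjoint_left.2 fun v hv hv' => ?_
    simp only [mem_treeClique, mem_laterCommonNeighbors, Fin.le_def, Fin.lt_def] at hv hv'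
    omega
  have hcL : c ∉ laterCommonNeighbors k G i j := by
    simp only [mem_laterCommonNeighbors, Fin.lt_def]
    omega
  rw [h.treeCliquesThrough_eq hij hi hc, h.closedNeighborFinset_inter_eq hij hi hc,
    card_insert_of_notMem hcL, card_union_of_disjoint hdisj, h.card_treeClique hk (by omega)]
  omega

lemma card_treeCliquesThrough_add (h : IsKm1Tree k n G) (hk : 0 < k)
    (hi : i ∈ G.closedNeighborFinset j) :
    #(treeCliquesThrough k G i j) + (k - 1) =
      #(G.closedNeighborFinset i ∩ G.closedNeighborFinset j) := by
  rcases le_total i j with hij | hji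
  · exact h.card_treeCliquesThrough_add_of_le hk hij hi
  · rw [treeCliquesThrough_comm, inter_comm]
    exact h.card_treeCliquesThrough_add_of_le hk hji (mem_closedNeighborFinset_comm.1 hi)

lemma treeCliquesThrough_eq_empty (h : IsKm1Tree k n G) (hi : i ∉ G.closedNeighborFinset j) :
    treeCliquesThrough k G i j = ∅ :=
  filter_eq_empty_iff.2 fun m _ ⟨him, hjm⟩ =>
    hi ((h.isClique_treeClique m).mem_closedNeighborFinset him hjm)

lemma cast_card_treeCliquesThrough (h : IsKm1Tree k n G) (hk : 0 < k) (i j : Fin n) :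
    (#(treeCliquesThrough k G i j) : ℝ) =
      if i = j then (#(G.neighborFinset i) : ℝ) - ((k : ℝ) - 2)
      else if G.Adj i j then (#(G.neighborFinset i ∩ G.neighborFinset j) : ℝ) - ((k : ℝ) - 3)
      else 0 := by
  split_ifs with hij hadj
  · subst hij
    have hcount := congrArg (Nat.cast (R := ℝ))
      (h.card_treeCliquesThrough_add hk (i := i) (j := i) (by simp))
    rw [inter_self, card_closedNeighborFinset] at hcount
    push_cast [hk] at hcount
    linarith
  · have hcount := congrArg (Nat.cast (R := ℝ))
      (h.card_treeCliquesThrough_add hk (mem_closedNeighborFinset.2 (Or.inr hadj.symm)))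
    rw [card_closedNeighborFinset_inter_of_adj hadj] at hcount
    push_cast [hk] at hcount
    linarith
  · rw [h.treeCliquesThrough_eq_empty (by simp [hij, adj_comm, hadj]), card_empty, Nat.cast_zero]

end IsKm1Tree

end TreeCliques

theorem km1tree_dual_matrix_posSemidef (k n : ℕ) (G : SimpleGraph (Fin n))
    [DecidableRel G.Adj] (h : IsKm1Tree k n G) :
    (Matrix.of fun i j : Fin n =>
      if i = j then
        (((G.neighborFinset i).card : ℝ) - ((k : ℝ) - 2)) /
          ((k : ℝ) * ((k : ℝ) - 1) * ((n : ℝ) - (k : ℝ) + 1))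
      else if G.Adj i j then
        (((G.neighborFinset i ∩ G.neighborFinset j).card : ℝ) - ((k : ℝ) - 3)) /
          ((k : ℝ) * ((k : ℝ) - 1) * ((n : ℝ) - (k : ℝ) + 1))
      else 0).PosSemidef := by
  obtain rfl | hk := Nat.eq_zero_or_pos k
  · -- the denominator vanishes, so every entry is `x / 0 = 0`
    convert PosSemidef.zero (n := Fin n) (R := ℝ)
    ext i j
    simp
  set D : ℝ := (k : ℝ) * ((k : ℝ) - 1) * ((n : ℝ) - (k : ℝ) + 1)
  have hD : 0 ≤ D := by
    have hkn : (k : ℝ) ≤ n := by exact_mod_cast h.1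
    have hk1 : (1 : ℝ) ≤ k := by exact_mod_cast hk
    exact mul_nonneg (mul_nonneg (by linarith) (by linarith)) (by linarith)
  set B := familyIncMatrix ℝ (treeClique k G)
  convert (posSemidef_conjTranspose_mul_self B).smul (inv_nonneg.2 hD) using 1
  ext i j
  rw [of_apply, Matrix.smul_apply, conjTranspose_eq_transpose_of_trivial,
    transpose_mul_self_familyIncMatrix_apply, ← treeCliquesThrough,
    h.cast_card_treeCliquesThrough hk]
  split_ifs <;> simp [div_eq_inv_mul]
end

section
/- For a (k-1)-tree G with n vertices, the matrix S'(G) with entries S'(G)_{ii} = |N(i)| - (k-2), S'(G)_{ij} = |N(i) ∩ N(j)| - (k-3) for edges (i,j), and 0 otherwise, satisfies: the sum of all off-diagonal entries equals k(k-1)(n-k+1). -/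
open Finset

theorem Finset.card_inter_insert_of_notMem {α : Type*} [DecidableEq α] {s : Finset α} {v : α}
    (hv : v ∉ s) (A : Finset α) :
    #(A ∩ insert v s) = #(A ∩ s) + if v ∈ A then 1 else 0 := by
  by_cases hA : v ∈ A
  · rw [inter_insert_of_mem hA, card_insert_of_notMem (fun h => hv (mem_of_mem_inter_right h)),
      if_pos hA]
  · rw [inter_insert_of_notMem hA, if_neg hA, add_zero]

namespace SimpleGraph

variable {V : Type*} [DecidableEq V] {G : SimpleGraph V} [DecidableRel G.Adj]

theorem filter_adj_eq_erase_of_isClique {D : Finset V} (hD : G.IsClique (D : Set V))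
    {i : V} (hi : i ∈ D) : D.filter (G.Adj i) = D.erase i := by
  ext j
  simp only [mem_filter, mem_erase]
  exact ⟨fun ⟨hj, hij⟩ => ⟨(G.ne_of_adj hij).symm, hj⟩,
    fun ⟨hji, hj⟩ => ⟨hj, hD hi hj (Ne.symm hji)⟩⟩

theorem sum_sum_ite_adj_of_isClique {D : Finset V} (hD : G.IsClique (D : Set V)) :
    ∑ i ∈ D, ∑ j ∈ D, (if G.Adj i j then (1 : ℝ) else 0) = #D * (#D - 1) := by
  have hrow : ∀ i ∈ D, ∑ j ∈ D, (if G.Adj i j then (1 : ℝ) else 0) = #D - 1 := by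
    intro i hi
    rw [sum_boole, filter_adj_eq_erase_of_isClique hD hi, card_erase_of_mem hi,
      Nat.cast_sub (card_pos.mpr ⟨i, hi⟩), Nat.cast_one]
  rw [sum_congr rfl hrow, sum_const, nsmul_eq_mul]

variable [Fintype V]

variable (G) in
/-- `G.dualEntry (k - 3) univ i j` is the entry `S'(G)_{ij}` for `i ≠ j`; a smaller `s` computes
it in the subgraph induced on `s`. -/
noncomputable def dualEntry (c : ℝ) (s : Finset V) (i j : V) : ℝ :=
  if G.Adj i j then (#(G.neighborFinset i ∩ G.neighborFinset j ∩ s) : ℝ) - c else 0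

variable (G) in
noncomputable def dualOffDiagSum (c : ℝ) (s : Finset V) : ℝ :=
  ∑ i ∈ s, ∑ j ∈ s, G.dualEntry c s i j

theorem dualEntry_of_not_adj (c : ℝ) (s : Finset V) {i j : V} (hij : ¬G.Adj i j) :
    G.dualEntry c s i j = 0 :=
  if_neg hij

theorem dualEntry_self (c : ℝ) (s : Finset V) (v : V) : G.dualEntry c s v v = 0 :=
  dualEntry_of_not_adj c s G.irrefl

theorem dualEntry_comm (c : ℝ) (s : Finset V) (i j : V) :
    G.dualEntry c s i j = G.dualEntry c s j i := by
  simp only [dualEntry, G.adj_comm i j, inter_comm (G.neighborFinset i)]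

theorem dualEntry_insert (c : ℝ) {s : Finset V} {v : V} (hv : v ∉ s) (i j : V) :
    G.dualEntry c (insert v s) i j =
      G.dualEntry c s i j + if G.Adj v i ∧ G.Adj v j ∧ G.Adj i j then 1 else 0 := by
  by_cases hij : G.Adj i j
  · simp only [dualEntry, hij, if_true, and_true, card_inter_insert_of_notMem hv, mem_inter,
      mem_neighborFinset, G.adj_comm i v, G.adj_comm j v]
    split_ifs <;> push_cast <;> ring
  · simp only [dualEntry, hij, if_false, and_false, add_zero]

theorem neighborFinset_inter_inter_eq_erase_of_isClique {s : Finset V} {v x : V}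
    (hD : G.IsClique (s.filter (G.Adj v) : Set V)) (hx : x ∈ s.filter (G.Adj v)) :
    G.neighborFinset v ∩ G.neighborFinset x ∩ s = (s.filter (G.Adj v)).erase x := by
  ext y
  simp only [mem_inter, mem_neighborFinset, mem_erase, mem_filter]
  constructor
  · rintro ⟨⟨hvy, hxy⟩, hy⟩
    exact ⟨(G.ne_of_adj hxy).symm, hy, hvy⟩
  · rintro ⟨hyx, hy, hvy⟩
    exact ⟨⟨hvy, hD hx (mem_filter.mpr ⟨hy, hvy⟩) hyx.symm⟩, hy⟩

theorem sum_dualEntry_left_of_isClique (c : ℝ) {s : Finset V} {v : V}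
    (hD : G.IsClique (s.filter (G.Adj v) : Set V)) :
    ∑ j ∈ s, G.dualEntry c s v j = #(s.filter (G.Adj v)) * (#(s.filter (G.Adj v)) - 1 - c) := by
  have hentry : ∀ j ∈ s.filter (G.Adj v), G.dualEntry c s v j = #(s.filter (G.Adj v)) - 1 - c :=
    fun j hj => by
      rw [dualEntry, if_pos (mem_filter.mp hj).2,
        neighborFinset_inter_inter_eq_erase_of_isClique hD hj, ← card_erase_add_one hj]
      push_cast
      ring
  rw [← sum_filter_add_sum_filter_not s (G.Adj v), sum_congr rfl hentry,
    sum_eq_zero fun j hj => dualEntry_of_not_adj c s (mem_filter.mp hj).2, sum_const,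
    nsmul_eq_mul, add_zero]

/-- With `D = s.filter (G.Adj v)`: the term `2 #D (#D - 1 - c)` comes from the new entries
`(v, x)` and `(x, v)`, `x ∈ D`; the term `#D (#D - 1)` from the common neighbour `v` gained by each
ordered pair of distinct vertices of `D`. -/
theorem dualOffDiagSum_insert (c : ℝ) {s : Finset V} {v : V} (hv : v ∉ s)
    (hD : G.IsClique (s.filter (G.Adj v) : Set V)) :
    G.dualOffDiagSum c (insert v s) =
      G.dualOffDiagSum c s + #(s.filter (G.Adj v)) * (#(s.filter (G.Adj v)) - 1)
        + 2 * (#(s.filter (G.Adj v)) * (#(s.filter (G.Adj v)) - 1 - c)) := by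
  have hpairs : ∑ i ∈ s, ∑ j ∈ s,
      (if G.Adj v i ∧ G.Adj v j ∧ G.Adj i j then (1 : ℝ) else 0) =
        #(s.filter (G.Adj v)) * (#(s.filter (G.Adj v)) - 1) := by
    rw [← sum_sum_ite_adj_of_isClique hD]
    simp only [ite_and, sum_filter, ite_sum_zero]
  have hcol : ∑ i ∈ s, G.dualEntry c s i v = ∑ j ∈ s, G.dualEntry c s v j :=
    sum_congr rfl fun i _ => dualEntry_comm c s i v
  simp only [dualOffDiagSum, sum_insert hv, dualEntry_insert c hv, dualEntry_self, G.irrefl,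
    false_and, and_false, if_false, add_zero, sum_const_zero, sum_add_distrib, hpairs, hcol,
    sum_dualEntry_left_of_isClique c hD]
  ring

theorem dualOffDiagSum_of_isClique (c : ℝ) {s : Finset V} (hs : G.IsClique (s : Set V)) :
    G.dualOffDiagSum c s = #s * (#s - 1) * (#s - 2 - c) := by
  induction s using Finset.induction_on with
  | empty => simp [dualOffDiagSum]
  | insert v s hv ih =>
    have hs' : G.IsClique (s : Set V) := hs.subset (by simp)
    have hDs : s.filter (G.Adj v) = s := filter_true_of_mem fun x hx =>
      hs (by simp) (by simp [hx]) (fun h => hv (h ▸ hx))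
    rw [dualOffDiagSum_insert c hv (by rwa [hDs]), hDs, ih hs', card_insert_of_notMem hv]
    push_cast
    ring

theorem filter_adj_filter_val_lt {n : ℕ} {G : SimpleGraph (Fin n)} [DecidableRel G.Adj]
    (j : Fin n) :
    (univ.filter fun i : Fin n => (i : ℕ) < j).filter (G.Adj j) =
      univ.filter fun i : Fin n => (i : ℕ) < j ∧ G.Adj i j := by
  simp only [filter_filter, G.adj_comm j]

end SimpleGraph

open SimpleGraph

namespace IsKm1Tree

variable {k n : ℕ} {G : SimpleGraph (Fin n)} [DecidableRel G.Adj]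

theorem isClique_filter_val_lt (h : IsKm1Tree k n G) :
    G.IsClique ((univ.filter fun i : Fin n => (i : ℕ) < k : Finset (Fin n)) : Set (Fin n)) :=
  fun i hi j hj hij => h.2.1 i j (by simpa using hi) (by simpa using hj) hij

theorem dualOffDiagSum_filter_val_lt (h : IsKm1Tree k n G) {t : ℕ} (hkt : k ≤ t)
    (htn : t ≤ n) :
    G.dualOffDiagSum (k - 3) (univ.filter fun i : Fin n => (i : ℕ) < t) =
      k * (k - 1) * (t - k + 1) := by
  induction t, hkt using Nat.le_induction with
  | base =>
    rw [dualOffDiagSum_of_isClique _ h.isClique_filter_val_lt, Fin.card_filter_val_lt,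
      min_eq_right htn]
    ring
  | succ t hkt ih =>
    set j : Fin n := ⟨t, htn⟩
    have hinsert : (univ.filter fun i : Fin n => (i : ℕ) < t + 1) =
        insert j (univ.filter fun i : Fin n => (i : ℕ) < t) := by
      ext i
      simp only [mem_filter, mem_univ, true_and, mem_insert, Fin.ext_iff, j]
      omega
    obtain ⟨hcard, hclique⟩ := h.2.2 j hkt
    rw [hinsert, dualOffDiagSum_insert _ (by simp [j])
      (by rw [filter_adj_filter_val_lt]; exact hclique.subset fun i hi =>
        Set.mem_insert_of_mem _ (by simpa using hi)),
      filter_adj_filter_val_lt, hcard, ih (by omega)]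
    rcases k with _ | k
    · simp
    · push_cast
      ring

end IsKm1Tree

/-- The sum of the off-diagonal entries of the (unscaled) dual matrix `S'(G)` of a
`(k-1)`-tree equals `k(k-1)(n-k+1)`. -/
theorem km1tree_offdiag_sum (k n : ℕ) (G : SimpleGraph (Fin n)) [DecidableRel G.Adj]
    (h : IsKm1Tree k n G) :
    ∑ i : Fin n, ∑ j : Fin n,
        (if i = j then (0 : ℝ)
         else if G.Adj i j then
           ((G.neighborFinset i ∩ G.neighborFinset j).card : ℝ) - ((k : ℝ) - 3)
         else 0) =
      (k : ℝ) * ((k : ℝ) - 1) * ((n : ℝ) - (k : ℝ) + 1) := by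
  have hentry : ∀ i j : Fin n, (if i = j then (0 : ℝ) else if G.Adj i j then
      ((G.neighborFinset i ∩ G.neighborFinset j).card : ℝ) - ((k : ℝ) - 3) else 0) =
      G.dualEntry (k - 3) univ i j := by
    intro i j
    rw [dualEntry, inter_univ]
    split_ifs with hij hadj <;> simp_all
  have huniv : (univ.filter fun i : Fin n => (i : ℕ) < n) = univ :=
    filter_true_of_mem fun i _ => i.isLt
  calc _ = G.dualOffDiagSum (k - 3) univ := by simp only [hentry, dualOffDiagSum]
    _ = _ := by rw [← huniv, h.dualOffDiagSum_filter_val_lt h.1 le_rfl]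
end

section
/- Let G be a graph on n vertices containing a k-clique K, and let c_1, c_2 be two proper k-colorings of G inducing different partitions of V into color classes, normalized so that c_1 and c_2 agree on K. Let C_1, C_2 be the corresponding matrices with (C_p)_{ij} = 1 if c_p(i) = c_p(j) and -1/(k-1) otherwise. Then for every α ∈ (0,1), the matrix αC_1 + (1-α)C_2 is positive semidefinite and has rank strictly greater than k-1. -/
/-!
The colour matrix of `c` is the pullback along `c` of `(k - 1)⁻¹` times the Laplacian of the
complete graph on the `k` colours. It is therefore positive semidefinite, and when `c` is onto
(as is a colouring that is injective on a `k`-clique) its rank is `k - 1`, because the Laplacian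
of a connected graph has a one-dimensional kernel. For positive semidefinite `A` and `B` the
kernel of `A + B` is `ker A ∩ ker B`. Two colourings with different partitions have vertices
`u`, `v` in one class of the first and in different classes of the second (or vice versa); then
`e u - e v` lies in the kernel of the first colour matrix but not of the combination, whose rank
therefore exceeds `k - 1`.
-/

/-- The matrix associated to a coloring `c`, with entry `1` if the endpoints get the same
color and `-1/(k-1)` otherwise. -/
noncomputable def colorMatrix (n k : ℕ) (c : Fin n → Fin k) : Matrix (Fin n) (Fin n) ℝ :=
  Matrix.of fun i j => if c i = c j then 1 else -1 / ((k : ℝ) - 1)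

open Matrix
open scoped ComplexOrder

namespace Matrix

variable {m n m₀ n₀ R : Type*} [Fintype n] [Fintype n₀]

theorem rank_submatrix_of_surjective [CommSemiring R] [StrongRankCondition R] (A : Matrix m n R)
    {r : m₀ → m} {c : n₀ → n} (hr : Function.Surjective r) (hc : Function.Surjective c) :
    (A.submatrix r c).rank = A.rank := by
  refine le_antisymm (rank_submatrix_le A r c) ?_
  calc A.rank = ((A.submatrix r c).submatrix (Function.surjInv hr) (Function.surjInv hc)).rank := by
        rw [submatrix_submatrix, Function.comp_surjInv, Function.comp_surjInv, submatrix_id_id]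
    _ ≤ _ := rank_submatrix_le _ _ _

theorem rank_lt_rank_of_ker_lt [Field R] {A B : Matrix n n R}
    (h : LinearMap.ker B.mulVecLin < LinearMap.ker A.mulVecLin) : A.rank < B.rank := by
  have hA := LinearMap.finrank_range_add_finrank_ker A.mulVecLin
  have hB := LinearMap.finrank_range_add_finrank_ker B.mulVecLin
  have := Submodule.finrank_lt_finrank_of_lt h
  unfold rank
  omega

end Matrix

namespace Matrix.PosSemidef

variable {n 𝕜 : Type*} [Fintype n] [RCLike 𝕜] {A B : Matrix n n 𝕜}

theorem ker_add_le_left (hA : A.PosSemidef) (hB : B.PosSemidef) :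
    LinearMap.ker (A + B).mulVecLin ≤ LinearMap.ker A.mulVecLin := by
  intro x hx
  have hx : star x ⬝ᵥ (A *ᵥ x) + star x ⬝ᵥ (B *ᵥ x) = 0 := by
    rw [← dotProduct_add, ← add_mulVec, show (A + B) *ᵥ x = 0 from hx, dotProduct_zero]
  exact (hA.dotProduct_mulVec_zero_iff x).1 ((add_eq_zero_iff_of_nonneg
    (hA.dotProduct_mulVec_nonneg x) (hB.dotProduct_mulVec_nonneg x)).1 hx).1

theorem rank_lt_rank_add (hA : A.PosSemidef) (hB : B.PosSemidef) {x : n → 𝕜}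
    (hAx : A *ᵥ x = 0) (hBx : B *ᵥ x ≠ 0) : A.rank < (A + B).rank := by
  refine rank_lt_rank_of_ker_lt (lt_of_le_of_ne (hA.ker_add_le_left hB) fun h => hBx ?_)
  have hx : x ∈ LinearMap.ker (A + B).mulVecLin := h ▸ hAx
  simpa [add_mulVec, hAx] using hx

end Matrix.PosSemidef

theorem SimpleGraph.rank_lapMatrix_add_card_connectedComponent {V : Type*} [Fintype V]
    [DecidableEq V] (G : SimpleGraph V) [DecidableRel G.Adj] [DecidableEq G.ConnectedComponent] :
    (G.lapMatrix ℝ).rank + Fintype.card G.ConnectedComponent = Fintype.card V := by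
  rw [card_connectedComponent_eq_finrank_ker_toLin'_lapMatrix, Matrix.toLin'_apply', Matrix.rank,
    LinearMap.finrank_range_add_finrank_ker, Module.finrank_fintype_fun_eq_card]

theorem SimpleGraph.rank_lapMatrix_top {V : Type*} [Fintype V] [DecidableEq V] [Nonempty V] :
    ((⊤ : SimpleGraph V).lapMatrix ℝ).rank = Fintype.card V - 1 := by
  classical
  have hsub : Subsingleton (⊤ : SimpleGraph V).ConnectedComponent :=
    SimpleGraph.connected_top.preconnected.subsingleton_connectedComponent
  have hcard : Fintype.card (⊤ : SimpleGraph V).ConnectedComponent = 1 :=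
    le_antisymm (Fintype.card_le_one_iff_subsingleton.2 hsub) Fintype.card_pos
  have := (⊤ : SimpleGraph V).rank_lapMatrix_add_card_connectedComponent
  omega

theorem SimpleGraph.Coloring.surjective_of_isNClique {V α : Type*} [Fintype α] {G : SimpleGraph V}
    (c : G.Coloring α) {K : Finset V} (hK : G.IsNClique (Fintype.card α) K) :
    Function.Surjective c := by
  classical
  have hinj : Set.InjOn c K := fun a ha b hb hab => by
    by_contra hne
    exact c.valid (hK.isClique ha hb hne) hab
  have : K.image c = Finset.univ :=
    Finset.eq_univ_of_card _ (by rw [Finset.card_image_of_injOn hinj, hK.card_eq])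
  intro t
  obtain ⟨i, -, hi⟩ := Finset.mem_image.1 (this ▸ Finset.mem_univ t)
  exact ⟨i, hi⟩

theorem colorMatrix_eq_submatrix_lapMatrix {n k : ℕ} (hk : 2 ≤ k) (c : Fin n → Fin k) :
    colorMatrix n k c =
      (((k : ℝ) - 1)⁻¹ • (⊤ : SimpleGraph (Fin k)).lapMatrix ℝ).submatrix c c := by
  have hk1 : (k : ℝ) - 1 ≠ 0 := (sub_pos.2 (Nat.one_lt_cast.2 hk)).ne'
  ext i j
  by_cases h : c i = c j
  · simp [colorMatrix, h, SimpleGraph.lapMatrix, SimpleGraph.degMatrix,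
      SimpleGraph.complete_graph_degree, Nat.cast_sub (by omega : 1 ≤ k), inv_mul_cancel₀ hk1]
  · simp [colorMatrix, h, SimpleGraph.lapMatrix, SimpleGraph.degMatrix, neg_div]

theorem colorMatrix_posSemidef {n k : ℕ} (hk : 2 ≤ k) (c : Fin n → Fin k) :
    (colorMatrix n k c).PosSemidef := by
  have hk1 : (0 : ℝ) ≤ k - 1 := (sub_pos.2 (Nat.one_lt_cast.2 hk)).le
  rw [colorMatrix_eq_submatrix_lapMatrix hk]
  exact ((SimpleGraph.posSemidef_lapMatrix ℝ ⊤).smul (inv_nonneg.2 hk1)).submatrix c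

theorem rank_colorMatrix_of_surjective {n k : ℕ} (hk : 2 ≤ k) {c : Fin n → Fin k}
    (hc : Function.Surjective c) : (colorMatrix n k c).rank = k - 1 := by
  have hk1 : (k : ℝ) - 1 ≠ 0 := (sub_pos.2 (Nat.one_lt_cast.2 hk)).ne'
  have : NeZero k := ⟨by omega⟩
  rw [colorMatrix_eq_submatrix_lapMatrix hk, rank_submatrix_of_surjective _ hc hc,
    rank_smul_of_mem_nonZeroDivisors _ (mem_nonZeroDivisors_of_ne_zero (inv_ne_zero hk1)),
    SimpleGraph.rank_lapMatrix_top, Fintype.card_fin]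

theorem colorMatrix_mulVec_single_sub_single_eq_zero_iff {n k : ℕ} (c : Fin n → Fin k)
    (u v : Fin n) : colorMatrix n k c *ᵥ (Pi.single u 1 - Pi.single v 1) = 0 ↔ c u = c v := by
  simp only [mulVec_sub, mulVec_single_one, funext_iff, sub_eq_zero, col_apply, colorMatrix,
    of_apply]
  refine ⟨fun h => by_contra fun huv => ?_, fun h i => by rw [h]⟩
  have h1 := h u
  have hk : (1 : ℝ) ≤ k := by exact_mod_cast (c u).pos
  simp only [if_neg huv, if_true] at h1
  have : -1 / ((k : ℝ) - 1) ≤ 0 := div_nonpos_of_nonpos_of_nonneg (by norm_num) (by linarith)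
  linarith

theorem rank_colorMatrix_lt_rank_smul_add_smul {n k : ℕ} (hk : 2 ≤ k) {c d : Fin n → Fin k}
    {a b : ℝ} (ha : 0 < a) (hb : 0 < b) {u v : Fin n} (hc : c u = c v) (hd : d u ≠ d v) :
    (colorMatrix n k c).rank < (a • colorMatrix n k c + b • colorMatrix n k d).rank := by
  rw [← rank_smul_of_mem_nonZeroDivisors _ (mem_nonZeroDivisors_of_ne_zero ha.ne')]
  refine ((colorMatrix_posSemidef hk c).smul ha.le).rank_lt_rank_add
    ((colorMatrix_posSemidef hk d).smul hb.le) (x := Pi.single u 1 - Pi.single v 1) ?_ ?_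
  · rw [smul_mulVec, (colorMatrix_mulVec_single_sub_single_eq_zero_iff c u v).2 hc, smul_zero]
  · rw [smul_mulVec, smul_ne_zero_iff]
    exact ⟨hb.ne', (colorMatrix_mulVec_single_sub_single_eq_zero_iff d u v).not.2 hd⟩

theorem convex_combination_rank_gt_general (n k : ℕ) (G : SimpleGraph (Fin n))
    (K : Finset (Fin n)) (hK : G.IsNClique k K)
    (c₁ c₂ : G.Coloring (Fin k))
    (hdiff : ∃ u v : Fin n, ¬ (c₁ u = c₁ v ↔ c₂ u = c₂ v))
    (α : ℝ) (hα : α ∈ Set.Ioo (0 : ℝ) 1) :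
    (α • colorMatrix n k c₁ + (1 - α) • colorMatrix n k c₂).PosSemidef ∧
    k - 1 < (α • colorMatrix n k c₁ + (1 - α) • colorMatrix n k c₂).rank := by
  obtain ⟨u, v, huv⟩ := hdiff
  obtain ⟨hα₀, hα₁⟩ := hα
  have hsep : (c₁ u = c₁ v ∧ c₂ u ≠ c₂ v) ∨ (c₂ u = c₂ v ∧ c₁ u ≠ c₁ v) := by tauto
  have hk : 2 ≤ k := by
    rcases hsep with ⟨-, h⟩ | ⟨-, h⟩ <;> exact Fin.nontrivial_iff_two_le.1 (nontrivial_of_ne _ _ h)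
  have hK' : G.IsNClique (Fintype.card (Fin k)) K := by rwa [Fintype.card_fin]
  refine ⟨((colorMatrix_posSemidef hk c₁).smul hα₀.le).add
    ((colorMatrix_posSemidef hk c₂).smul (sub_nonneg.2 hα₁.le)), ?_⟩
  rcases hsep with ⟨hc, hd⟩ | ⟨hc, hd⟩
  · rw [← rank_colorMatrix_of_surjective hk (c₁.surjective_of_isNClique hK')]
    exact rank_colorMatrix_lt_rank_smul_add_smul hk hα₀ (sub_pos.2 hα₁) hc hd
  · rw [add_comm, ← rank_colorMatrix_of_surjective hk (c₂.surjective_of_isNClique hK')]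
    exact rank_colorMatrix_lt_rank_smul_add_smul hk (sub_pos.2 hα₁) hα₀ hc hd

theorem convex_combination_rank_gt (n k : ℕ) (G : SimpleGraph (Fin n))
    (K : Finset (Fin n)) (hK : G.IsNClique k K)
    (c₁ c₂ : G.Coloring (Fin k))
    (hagree : ∀ i ∈ K, c₁ i = c₂ i)
    (hdiff : ∃ u v : Fin n, ¬ (c₁ u = c₁ v ↔ c₂ u = c₂ v))
    (α : ℝ) (hα : α ∈ Set.Ioo (0 : ℝ) 1) :
    (α • colorMatrix n k c₁ + (1 - α) • colorMatrix n k c₂).PosSemidef ∧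
    k - 1 < (α • colorMatrix n k c₁ + (1 - α) • colorMatrix n k c₂).rank :=
  convex_combination_rank_gt_general n k G K hK c₁ c₂ hdiff α hα
end

section
/- Let G be a k-colorable graph on n vertices containing a k-clique, with a fixed proper k-coloring c, and let C(G) be the cost matrix with C(G)_{ij} = -1 when j is the next vertex after i (in the vertex ordering) with the same color as i (and symmetrically), and 0 otherwise. Then the dual slack matrix S built from the assignment y_i = s_i - [i ∈ K], z_e = -1 for edges e inside the clique K and 0 otherwise (where s_i is the i-th column sum of C(G)) is positive semidefinite. -/
/-!
Let `H` be the graph joining each vertex to the next vertex of its colour. Then `C(G)` is minus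
the adjacency matrix of `H`, so `C(G) - diag(s)` is the Laplacian of `H`, and the remaining part
of `S`, namely `diag([i ∈ K]) + ∑_{e ⊆ K} E_e`, is the rank-one matrix `𝟙_K 𝟙_Kᵀ`. Both are
positive semidefinite.
-/

/-- The coloring-dependent cost matrix `C(G)`: entry `(i,j)` is `-1` when `i ≠ j`, `i` and
`j` receive the same color, and no vertex strictly between them receives that color;
all other entries are `0`. -/
def costMatrix (n k : ℕ) (c : Fin n → Fin k) : Matrix (Fin n) (Fin n) ℝ :=
  Matrix.of fun i j =>
    if i ≠ j ∧ c i = c j ∧ ∀ ℓ : Fin n, min i j < ℓ → ℓ < max i j → c ℓ ≠ c i then -1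
    else 0

open Matrix

namespace Matrix

theorem diagonal_indicator_add_sum_single_eq_vecMulVec {ι R : Type*} [LinearOrder ι]
    [Semiring R] (s : Finset ι) :
    diagonal (fun i => if i ∈ s then (1 : R) else 0)
        + ∑ p ∈ (s ×ˢ s).filter (fun p : ι × ι => p.1 < p.2),
            (single p.1 p.2 (1 : R) + single p.2 p.1 1)
      = vecMulVec (fun i => if i ∈ s then (1 : R) else 0) (fun i => if i ∈ s then 1 else 0) := by
  ext i j
  have hpair (p : ι × ι) : p.1 = i ∧ p.2 = j ↔ p = (i, j) := by rw [Prod.ext_iff]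
  have hpair' (p : ι × ι) : p.2 = i ∧ p.1 = j ↔ p = (j, i) := by rw [Prod.ext_iff, and_comm]
  simp only [Matrix.add_apply, Matrix.sum_apply, diagonal_apply, vecMulVec_apply, single_apply,
    Finset.sum_add_distrib, hpair, hpair', Finset.sum_ite_eq', Finset.mem_filter,
    Finset.mem_product]
  rcases lt_trichotomy i j with h | rfl | h
  · simp [h.ne, h, h.not_gt, ← ite_and, and_comm]
  · by_cases hi : i ∈ s <;> simp [hi]
  · simp [h.ne', h, h.not_gt, ← ite_and, and_comm]

end Matrix

section ConsecutiveColor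

variable {n k : ℕ} (c : Fin n → Fin k)

def consecutiveSameColorGraph : SimpleGraph (Fin n) where
  Adj i j := i ≠ j ∧ c i = c j ∧ ∀ ℓ, min i j < ℓ → ℓ < max i j → c ℓ ≠ c i
  symm := ⟨fun i j ⟨hne, hc, hbetween⟩ =>
    ⟨hne.symm, hc.symm, fun ℓ h₁ h₂ => hc ▸ hbetween ℓ (min_comm i j ▸ h₁) (max_comm i j ▸ h₂)⟩⟩
  loopless := ⟨fun _ h => h.1 rfl⟩

instance : DecidableRel (consecutiveSameColorGraph c).Adj := fun _ _ =>
  inferInstanceAs (Decidable (_ ∧ _ ∧ _))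

theorem costMatrix_eq_neg_adjMatrix :
    costMatrix n k c = -(consecutiveSameColorGraph c).adjMatrix ℝ := by
  ext i j
  change (if (consecutiveSameColorGraph c).Adj i j then _ else _) = _
  simp only [Matrix.neg_apply, SimpleGraph.adjMatrix_apply]
  split_ifs <;> norm_num

theorem costMatrix_sub_diagonal_sum_eq_lapMatrix :
    costMatrix n k c - diagonal (fun i => ∑ j, costMatrix n k c j i)
      = (consecutiveSameColorGraph c).lapMatrix ℝ := by
  have hdeg (i : Fin n) : ∑ j, (consecutiveSameColorGraph c).adjMatrix ℝ j i
      = (consecutiveSameColorGraph c).degree i := by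
    simp [SimpleGraph.degree_eq_sum_if_adj, SimpleGraph.adjMatrix_apply, SimpleGraph.adj_comm]
  simp only [costMatrix_eq_neg_adjMatrix, Matrix.neg_apply, Finset.sum_neg_distrib, hdeg,
    SimpleGraph.lapMatrix, SimpleGraph.degMatrix, ← diagonal_neg]
  abel

end ConsecutiveColor

theorem cost_dual_slack_posSemidef_general (n k : ℕ) (G : SimpleGraph (Fin n))
    (K : Finset (Fin n)) (c : G.Coloring (Fin k)) :
    (costMatrix n k c
      - Matrix.diagonal (fun i : Fin n =>
          (∑ j : Fin n, costMatrix n k c j i) - (if i ∈ K then 1 else 0))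
      + ∑ p ∈ (K ×ˢ K).filter (fun p : Fin n × Fin n => p.1 < p.2),
          (Matrix.single p.1 p.2 (1 : ℝ) +
            Matrix.single p.2 p.1 1)).PosSemidef := by
  set v : Fin n → ℝ := fun i => if i ∈ K then 1 else 0
  have hsplit : costMatrix n k c - diagonal (fun i => (∑ j, costMatrix n k c j i) - v i)
        + ∑ p ∈ (K ×ˢ K).filter (fun p : Fin n × Fin n => p.1 < p.2),
            (single p.1 p.2 (1 : ℝ) + single p.2 p.1 1)
      = (consecutiveSameColorGraph c).lapMatrix ℝ + vecMulVec v v := by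
    rw [← costMatrix_sub_diagonal_sum_eq_lapMatrix,
      ← diagonal_indicator_add_sum_single_eq_vecMulVec, ← diagonal_sub]
    abel
  rw [hsplit]
  exact (SimpleGraph.posSemidef_lapMatrix ℝ _).add (by simpa using posSemidef_vecMulVec_self_star v)

theorem cost_dual_slack_posSemidef (n k : ℕ) (G : SimpleGraph (Fin n))
    (K : Finset (Fin n)) (hK : G.IsNClique k K) (c : G.Coloring (Fin k)) :
    (costMatrix n k c
      - Matrix.diagonal (fun i : Fin n =>
          (∑ j : Fin n, costMatrix n k c j i) - (if i ∈ K then 1 else 0))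
      + ∑ p ∈ (K ×ˢ K).filter (fun p : Fin n × Fin n => p.1 < p.2),
          (Matrix.single p.1 p.2 (1 : ℝ) +
            Matrix.single p.2 p.1 1)).PosSemidef :=
  cost_dual_slack_posSemidef_general n k G K c
end
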